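/- Assume κ := ℓ_c/(η+ν) + ℓ_s M Γ(1−α) (λ−η−ν)^{α−1} < 1, and let v* ∈ C⁻_η be the unique fixed point of T for a given ξ ∈ H. Then ‖v*‖_{C⁻_η} ≤ (1−κ)^{−1} ‖ξ‖. If in addition ‖F_s(u)‖_Y ≤ b ‖u‖ for all u ∈ H and some b > 0, then the stable component v*_s(t) := ∫_{−∞}^t e^{ν(t−τ) + ∫_τ^t z(r) dr} e^{−z(τ)} S(t−τ)( F_s( e^{z(τ)} v*(τ) ) ) dτ satisfies ‖v*_s‖_{C⁻_η} ≤ b M Γ(1−α) (λ−η−ν)^{α−1} (1−κ)^{−1} ‖ξ‖. -/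

import Mathlib

/-! The weight `ω = cetaWeight η z` of `C⁻_η` turns the kernel `k = lpKernel ν z` of `T` into
a plain exponential: `ω(t) k(t,τ) e^{z(τ)} = e^{(η+ν)(t−τ)} ω(τ)`. Hence, for `v` of weighted
norm `N`, the centre integral of `T v` has weighted norm at most `ℓ_c N/(η+ν)`, and the stable
one, by `∫_0^∞ r^{−α} e^{−(λ−η−ν)r} dr = Γ(1−α)(λ−η−ν)^{α−1}`, at most
`ℓ_s M Γ(1−α)(λ−η−ν)^{α−1} N`. For the fixed point this gives `N ≤ ‖ξ‖ + κ N`, and the stable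
estimate with `b` in place of `ℓ_s` then bounds `v*_s`. -/

/-- The weighted norm of the space `C⁻_η` (Definition 3.3 of the paper):
`‖v‖_{C⁻_η} = sup_{t ≤ 0} e^{ηt − ∫_0^t z(s) ds} ‖v t‖`. -/
noncomputable def cetaNorm {H : Type*} [NormedAddCommGroup H]
    (η : ℝ) (z : ℝ → ℝ) (v : ℝ → H) : ℝ :=
  sSup ((fun t => Real.exp (η * t - ∫ s in (0:ℝ)..t, z s) * ‖v t‖) '' Set.Iic 0)

/-- Membership in the space `C⁻_η`: `v : (−∞,0] → H` is continuous with finite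
weighted norm. -/
def memCeta {H : Type*} [NormedAddCommGroup H] (η : ℝ) (z : ℝ → ℝ) (v : ℝ → H) : Prop :=
  ContinuousOn v (Set.Iic 0) ∧
    BddAbove ((fun t => Real.exp (η * t - ∫ s in (0:ℝ)..t, z s) * ‖v t‖) '' Set.Iic 0)

/-- The Lyapunov–Perron operator `T` of Definition 3.4 of the paper. -/
noncomputable def lpOp {H Y : Type*} [NormedAddCommGroup H] [NormedSpace ℝ H]
    [NormedAddCommGroup Y] [NormedSpace ℝ Y]
    (ν : ℝ) (z : ℝ → ℝ) (S : ℝ → Y →L[ℝ] H) (Fc : H → H) (Fs : H → Y)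
    (ξ : H) (v : ℝ → H) : ℝ → H := fun t =>
  Real.exp (ν * t + ∫ s in (0:ℝ)..t, z s) • ξ
  + (∫ τ in (0:ℝ)..t,
      (Real.exp (ν * (t - τ) + ∫ r in τ..t, z r) * Real.exp (-z τ)) •
        Fc (Real.exp (z τ) • v τ))
  + ∫ τ in Set.Iic t,
      (Real.exp (ν * (t - τ) + ∫ r in τ..t, z r) * Real.exp (-z τ)) •
        (S (t - τ)) (Fs (Real.exp (z τ) • v τ))

open MeasureTheory Set

noncomputable def cetaWeight (η : ℝ) (z : ℝ → ℝ) (t : ℝ) : ℝ :=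
  Real.exp (η * t - ∫ s in (0:ℝ)..t, z s)

noncomputable def lpKernel (ν : ℝ) (z : ℝ → ℝ) (t τ : ℝ) : ℝ :=
  Real.exp (ν * (t - τ) + ∫ r in τ..t, z r) * Real.exp (-z τ)

lemma cetaWeight_pos (η : ℝ) (z : ℝ → ℝ) (t : ℝ) : 0 < cetaWeight η z t :=
  Real.exp_pos _

lemma lpKernel_pos (ν : ℝ) (z : ℝ → ℝ) (t τ : ℝ) : 0 < lpKernel ν z t τ :=
  mul_pos (Real.exp_pos _) (Real.exp_pos _)

lemma integrableOn_Ioi_rpow_neg_mul_exp_neg_mul {α μ : ℝ} (hα : α < 1) (hμ : 0 < μ) :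
    IntegrableOn (fun r : ℝ => r ^ (-α) * Real.exp (-(μ * r))) (Ioi 0) := by
  simpa only [Real.rpow_one, neg_mul] using
    integrableOn_rpow_mul_exp_neg_mul_rpow (p := 1) (s := -α) (b := μ) (by linarith)
      zero_lt_one hμ

lemma integral_Ioi_rpow_neg_mul_exp_neg_mul {α μ : ℝ} (hα : α < 1) (hμ : 0 < μ) :
    ∫ r in Ioi (0:ℝ), r ^ (-α) * Real.exp (-(μ * r)) = Real.Gamma (1 - α) * μ ^ (α - 1) := by
  have h := Real.integral_rpow_mul_exp_neg_mul_Ioi (a := 1 - α) (r := μ) (by linarith) hμ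
  rw [sub_sub_cancel_left] at h
  rw [h, one_div, Real.inv_rpow hμ.le, ← Real.rpow_neg hμ.le, neg_sub, mul_comm]

section Reflection

variable {E : Type*} [NormedAddCommGroup E] (t : ℝ)

lemma preimage_sub_left_Ioi_zero : (fun τ : ℝ => t - τ) ⁻¹' Ioi 0 = Iio t := by
  ext τ; simp

lemma setIntegral_Iio_comp_sub_left [NormedSpace ℝ E] (g : ℝ → E) :
    ∫ τ in Iio t, g (t - τ) = ∫ r in Ioi (0:ℝ), g r := by
  rw [← preimage_sub_left_Ioi_zero,
    (Measure.measurePreserving_sub_left volume t).setIntegral_preimage_emb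
      (MeasurableEquiv.subLeft t).measurableEmbedding]

lemma MeasureTheory.IntegrableOn.comp_sub_left_Iio {g : ℝ → E} (hg : IntegrableOn g (Ioi 0)) :
    IntegrableOn (fun τ => g (t - τ)) (Iio t) := by
  rw [← preimage_sub_left_Ioi_zero]
  exact ((Measure.measurePreserving_sub_left volume t).integrableOn_comp_preimage
    (MeasurableEquiv.subLeft t).measurableEmbedding).mpr hg

end Reflection

lemma abs_integral_exp_mul_sub_le {c t : ℝ} (hc : 0 < c) (ht : t ≤ 0) :
    |∫ τ in (0:ℝ)..t, Real.exp (c * (t - τ))| ≤ c⁻¹ := by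
  rw [intervalIntegral.integral_comp_sub_left (fun x => Real.exp (c * x)),
    intervalIntegral.integral_comp_mul_left _ hc.ne', integral_exp,
    sub_self, sub_zero, mul_zero, Real.exp_zero, smul_eq_mul, abs_mul, abs_inv,
    abs_of_pos hc, abs_of_nonpos (sub_nonpos.mpr (Real.exp_le_one_iff.mpr (by nlinarith)))]
  exact mul_le_of_le_one_right (inv_nonneg.mpr hc.le) (by linarith [Real.exp_pos (c * t)])

section WeightedEstimates

variable {H E : Type*} [NormedAddCommGroup H] [NormedSpace ℝ H] [NormedAddCommGroup E]
  [NormedSpace ℝ E] {η ν : ℝ} {z : ℝ → ℝ} {t : ℝ}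

lemma cetaWeight_mul_lpKernel_mul_exp (hz : ContinuousOn z (Iic 0)) (ht : t ≤ 0) {τ : ℝ}
    (hτ : τ ≤ 0) :
    cetaWeight η z t * lpKernel ν z t τ * Real.exp (z τ) =
      Real.exp ((η + ν) * (t - τ)) * cetaWeight η z τ := by
  have hint : ∀ s ≤ (0:ℝ), IntervalIntegrable z volume 0 s := fun s hs =>
    (hz.mono (by rw [uIcc_of_ge hs]; exact Icc_subset_Iic_self)).intervalIntegrable
  rw [cetaWeight, cetaWeight, lpKernel,
    ← intervalIntegral.integral_interval_sub_left (hint t ht) (hint τ hτ)]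
  simp only [← Real.exp_add]
  congr 1
  ring

lemma cetaWeight_mul_norm_lpKernel_smul_le (hz : ContinuousOn z (Iic 0)) {G : H → E} {c : ℝ}
    (hc : 0 ≤ c) (hG : ∀ u, ‖G u‖ ≤ c * ‖u‖) {v : ℝ → H} {N τ : ℝ}
    (hv : cetaWeight η z τ * ‖v τ‖ ≤ N) (ht : t ≤ 0) (hτ : τ ≤ 0) :
    cetaWeight η z t * ‖lpKernel ν z t τ • G (Real.exp (z τ) • v τ)‖ ≤
      c * N * Real.exp ((η + ν) * (t - τ)) := by
  have hweight := (cetaWeight_pos η z t).le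
  have hkernel := (lpKernel_pos ν z t τ).le
  calc cetaWeight η z t * ‖lpKernel ν z t τ • G (Real.exp (z τ) • v τ)‖
      = cetaWeight η z t * lpKernel ν z t τ * ‖G (Real.exp (z τ) • v τ)‖ := by
        rw [norm_smul, Real.norm_of_nonneg hkernel, mul_assoc]
    _ ≤ cetaWeight η z t * lpKernel ν z t τ * (c * (Real.exp (z τ) * ‖v τ‖)) := by
        gcongr
        simpa only [norm_smul, Real.norm_of_nonneg (Real.exp_pos _).le] using
          hG (Real.exp (z τ) • v τ)
    _ = c * Real.exp ((η + ν) * (t - τ)) * (cetaWeight η z τ * ‖v τ‖) := by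
        linear_combination c * ‖v τ‖ * cetaWeight_mul_lpKernel_mul_exp hz ht hτ
    _ ≤ c * N * Real.exp ((η + ν) * (t - τ)) := by
        rw [mul_right_comm c N]
        exact mul_le_mul_of_nonneg_left hv (by positivity)

lemma cetaWeight_mul_norm_exp_smul_le (hην : 0 ≤ η + ν) (ht : t ≤ 0) (ξ : H) :
    cetaWeight η z t * ‖Real.exp (ν * t + ∫ s in (0:ℝ)..t, z s) • ξ‖ ≤ ‖ξ‖ := by
  rw [norm_smul, Real.norm_of_nonneg (Real.exp_pos _).le, ← mul_assoc, cetaWeight,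
    ← Real.exp_add]
  refine mul_le_of_le_one_left (norm_nonneg ξ) (Real.exp_le_one_iff.mpr ?_)
  nlinarith

variable (hz : ContinuousOn z (Iic 0)) {v : ℝ → H} {N : ℝ} (hN0 : 0 ≤ N)
  (hN : ∀ τ ≤ (0:ℝ), cetaWeight η z τ * ‖v τ‖ ≤ N)
include hz hN0 hN

lemma cetaWeight_mul_norm_integral_lpKernel_smul_le (hην : 0 < η + ν) {G : H → E} {c : ℝ}
    (hc : 0 ≤ c) (hG : ∀ u, ‖G u‖ ≤ c * ‖u‖) (ht : t ≤ 0) :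
    cetaWeight η z t * ‖∫ τ in (0:ℝ)..t, lpKernel ν z t τ • G (Real.exp (z τ) • v τ)‖ ≤
      c / (η + ν) * N := by
  rw [← Real.norm_of_nonneg (cetaWeight_pos η z t).le, ← norm_smul,
    ← intervalIntegral.integral_smul]
  calc _ ≤ |∫ τ in (0:ℝ)..t, c * N * Real.exp ((η + ν) * (t - τ))| := by
        refine intervalIntegral.norm_integral_le_abs_of_norm_le ?_
          (Continuous.intervalIntegrable (by fun_prop) _ _)
        filter_upwards [ae_restrict_mem measurableSet_uIoc] with τ hτ
        rw [uIoc_of_ge ht] at hτ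
        rw [norm_smul, Real.norm_of_nonneg (cetaWeight_pos η z t).le]
        exact cetaWeight_mul_norm_lpKernel_smul_le hz hc hG (hN τ hτ.2) ht hτ.2
    _ ≤ c * N * (η + ν)⁻¹ := by
        rw [intervalIntegral.integral_const_mul, abs_mul, abs_of_nonneg (by positivity)]
        exact mul_le_mul_of_nonneg_left (abs_integral_exp_mul_sub_le hην ht) (by positivity)
    _ = c / (η + ν) * N := by ring

lemma cetaWeight_mul_norm_setIntegral_lpKernel_smul_le {Y : Type*} [NormedAddCommGroup Y]
    [NormedSpace ℝ Y] {lam M α b : ℝ} (hlam : η + ν < lam) (hα : α < 1) {S : ℝ → Y →L[ℝ] E}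
    (hS : ∀ r > (0:ℝ), ‖S r‖ ≤ M * r ^ (-α) * Real.exp (-lam * r)) {Fs : H → Y} (hb : 0 ≤ b)
    (hFs : ∀ u, ‖Fs u‖ ≤ b * ‖u‖) (ht : t ≤ 0) :
    cetaWeight η z t *
        ‖∫ τ in Iic t, lpKernel ν z t τ • S (t - τ) (Fs (Real.exp (z τ) • v τ))‖ ≤
      b * M * Real.Gamma (1 - α) * (lam - η - ν) ^ (α - 1) * N := by
  have hμ : 0 < lam - η - ν := by linarith
  set g : ℝ → ℝ := fun r => r ^ (-α) * Real.exp (-((lam - η - ν) * r))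
  rw [setIntegral_congr_set Iio_ae_eq_Iic.symm, ← Real.norm_of_nonneg (cetaWeight_pos η z t).le,
    ← norm_smul, ← integral_smul]
  calc _ ≤ ∫ τ in Iio t, b * M * N * g (t - τ) := by
        refine norm_integral_le_of_norm_le
          (((integrableOn_Ioi_rpow_neg_mul_exp_neg_mul hα hμ).comp_sub_left_Iio t).const_mul _) ?_
        filter_upwards [ae_restrict_mem measurableSet_Iio] with τ hτ
        have hr : 0 < t - τ := sub_pos.mpr hτ
        have hτ0 : τ ≤ 0 := hτ.le.trans ht
        have hG : ∀ u, ‖S (t - τ) (Fs u)‖ ≤ ‖S (t - τ)‖ * b * ‖u‖ := fun u => by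
          rw [mul_assoc]; exact (S (t - τ)).le_opNorm_of_le (hFs u)
        have hexp : Real.exp (-lam * (t - τ)) * Real.exp ((η + ν) * (t - τ)) =
            Real.exp (-((lam - η - ν) * (t - τ))) := by
          rw [← Real.exp_add]; ring_nf
        rw [norm_smul, Real.norm_of_nonneg (cetaWeight_pos η z t).le]
        calc _ ≤ ‖S (t - τ)‖ * b * N * Real.exp ((η + ν) * (t - τ)) :=
              cetaWeight_mul_norm_lpKernel_smul_le hz (by positivity) hG (hN τ hτ0) ht hτ0
          _ ≤ M * (t - τ) ^ (-α) * Real.exp (-lam * (t - τ)) * b * N *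
                Real.exp ((η + ν) * (t - τ)) := by
              gcongr; exact hS _ hr
          _ = b * M * N * g (t - τ) := by
              simp only [g]; linear_combination b * M * N * (t - τ) ^ (-α) * hexp
    _ = b * M * Real.Gamma (1 - α) * (lam - η - ν) ^ (α - 1) * N := by
        rw [integral_const_mul, setIntegral_Iio_comp_sub_left,
          integral_Ioi_rpow_neg_mul_exp_neg_mul hα hμ]
        ring

end WeightedEstimates

lemma cetaWeight_mul_norm_lpOp_le {H Y : Type*} [NormedAddCommGroup H] [NormedSpace ℝ H]
    [NormedAddCommGroup Y] [NormedSpace ℝ Y] {ν η lam M α : ℝ} (hην : 0 < η + ν)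
    (hlam : η + ν < lam) (hα : α < 1) {z : ℝ → ℝ} (hz : ContinuousOn z (Iic 0))
    {S : ℝ → Y →L[ℝ] H} (hS : ∀ r > (0:ℝ), ‖S r‖ ≤ M * r ^ (-α) * Real.exp (-lam * r))
    {Fc : H → H} {Fs : H → Y} {ℓc ℓs : ℝ} (hℓc : 0 ≤ ℓc) (hFc : ∀ u, ‖Fc u‖ ≤ ℓc * ‖u‖)
    (hℓs : 0 ≤ ℓs) (hFs : ∀ u, ‖Fs u‖ ≤ ℓs * ‖u‖) (ξ : H) {v : ℝ → H} {N : ℝ} (hN0 : 0 ≤ N)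
    (hN : ∀ τ ≤ (0:ℝ), cetaWeight η z τ * ‖v τ‖ ≤ N) {t : ℝ} (ht : t ≤ 0) :
    cetaWeight η z t * ‖lpOp ν z S Fc Fs ξ v t‖ ≤
      ‖ξ‖ + (ℓc / (η + ν) + ℓs * M * Real.Gamma (1 - α) * (lam - η - ν) ^ (α - 1)) * N := by
  have hfree := cetaWeight_mul_norm_exp_smul_le (z := z) hην.le ht ξ
  have hcenter := cetaWeight_mul_norm_integral_lpKernel_smul_le hz hN0 hN hην hℓc hFc ht
  have hstable :=
    cetaWeight_mul_norm_setIntegral_lpKernel_smul_le hz hN0 hN hlam hα hS hℓs hFs ht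
  calc cetaWeight η z t * ‖lpOp ν z S Fc Fs ξ v t‖
      ≤ cetaWeight η z t * (‖Real.exp (ν * t + ∫ s in (0:ℝ)..t, z s) • ξ‖
          + ‖∫ τ in (0:ℝ)..t, lpKernel ν z t τ • Fc (Real.exp (z τ) • v τ)‖
          + ‖∫ τ in Iic t, lpKernel ν z t τ • S (t - τ) (Fs (Real.exp (z τ) • v τ))‖) :=
        mul_le_mul_of_nonneg_left (norm_add₃_le ..) (cetaWeight_pos η z t).le
    _ ≤ _ := by rw [mul_add, mul_add]; linarith

theorem fixed_point_bounds_general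
    {H Y : Type*} [NormedAddCommGroup H] [NormedSpace ℝ H]
    [NormedAddCommGroup Y] [NormedSpace ℝ Y]
    (ν η lam M α : ℝ) (hην : 0 < η + ν) (hlam : η + ν < lam) (hM : 0 < M)
    (hα : α ∈ Set.Ioo (0:ℝ) 1)
    (z : ℝ → ℝ) (hz : ContinuousOn z (Set.Iic 0))
    (S : ℝ → Y →L[ℝ] H)
    (hS : ∀ r > (0:ℝ), ‖S r‖ ≤ M * r ^ (-α) * Real.exp (-lam * r))
    (ℓc ℓs : NNReal) (Fc : H → H) (Fs : H → Y)
    (hFc : LipschitzWith ℓc Fc) (hFc0 : Fc 0 = 0)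
    (hFs : LipschitzWith ℓs Fs) (hFs0 : Fs 0 = 0)
    (κ : ℝ)
    (hκdef : κ = ℓc / (η + ν) + ℓs * M * Real.Gamma (1 - α) * (lam - η - ν) ^ (α - 1))
    (hκ : κ < 1) (ξ : H)
    (vstar : ℝ → H) (hmem : memCeta η z vstar)
    (hfix : ∀ t ≤ (0:ℝ), lpOp ν z S Fc Fs ξ vstar t = vstar t) :
    cetaNorm η z vstar ≤ (1 - κ)⁻¹ * ‖ξ‖ ∧
    ∀ b > (0:ℝ), (∀ u : H, ‖Fs u‖ ≤ b * ‖u‖) →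
      cetaNorm η z (fun t => ∫ τ in Set.Iic t,
          (Real.exp (ν * (t - τ) + ∫ r in τ..t, z r) * Real.exp (-z τ)) •
            (S (t - τ)) (Fs (Real.exp (z τ) • vstar τ)))
        ≤ b * M * Real.Gamma (1 - α) * (lam - η - ν) ^ (α - 1) * (1 - κ)⁻¹ * ‖ξ‖ := by
  set N := cetaNorm η z vstar
  have hN : ∀ τ ≤ (0:ℝ), cetaWeight η z τ * ‖vstar τ‖ ≤ N :=
    fun τ hτ => le_csSup hmem.2 ⟨τ, hτ, rfl⟩
  have hN0 : 0 ≤ N := (mul_nonneg (cetaWeight_pos η z 0).le (norm_nonneg _)).trans (hN 0 le_rfl)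
  have hNκ : N ≤ ‖ξ‖ + κ * N := by
    refine csSup_le (nonempty_Iic.image _) ?_
    rintro _ ⟨t, ht, rfl⟩
    show cetaWeight η z t * ‖vstar t‖ ≤ _
    rw [hκdef, ← hfix t ht]
    exact cetaWeight_mul_norm_lpOp_le hην hlam hα.2 hz hS ℓc.coe_nonneg (hFc.norm_le_mul hFc0)
      ℓs.coe_nonneg (hFs.norm_le_mul hFs0) ξ hN0 hN ht
  have hNξ : N ≤ (1 - κ)⁻¹ * ‖ξ‖ := by
    rw [inv_mul_eq_div, le_div_iff₀ (sub_pos.mpr hκ)]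
    linarith
  refine ⟨hNξ, fun b hb hFsb => csSup_le (nonempty_Iic.image _) ?_⟩
  rintro _ ⟨t, ht, rfl⟩
  have hΓ := Real.Gamma_pos_of_pos (sub_pos.mpr hα.2)
  have hμ := Real.rpow_pos_of_pos (by linarith : 0 < lam - η - ν) (α - 1)
  calc _ ≤ b * M * Real.Gamma (1 - α) * (lam - η - ν) ^ (α - 1) * N :=
        cetaWeight_mul_norm_setIntegral_lpKernel_smul_le hz hN0 hN hlam hα.2 hS hb.le hFsb ht
    _ ≤ _ := by
        rw [mul_assoc _ (1 - κ)⁻¹]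
        gcongr

/-- (Lemma 4.1 of the paper, abstracted.)  Assume the contraction
condition `κ < 1` and let `v*` be the fixed point of the Lyapunov–Perron operator `T`
for a given `ξ`.  Then `‖v*‖_{C⁻_η} ≤ (1−κ)⁻¹ ‖ξ‖`; and if moreover
`‖F_s(u)‖ ≤ b ‖u‖` for all `u`, then the stable component
`v*_s(t) = ∫_{−∞}^t e^{ν(t−τ) + ∫_τ^t z} e^{−z(τ)} S(t−τ)(F_s(e^{z(τ)} v*(τ))) dτ`
satisfies `‖v*_s‖_{C⁻_η} ≤ b M Γ(1−α) (λ−η−ν)^{α−1} (1−κ)⁻¹ ‖ξ‖`. -/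
theorem fixed_point_bounds
    {H Y : Type*} [NormedAddCommGroup H] [NormedSpace ℝ H] [CompleteSpace H]
    [NormedAddCommGroup Y] [NormedSpace ℝ Y]
    (ν η lam M α : ℝ) (hην : 0 < η + ν) (hlam : η + ν < lam) (hM : 0 < M)
    (hα : α ∈ Set.Ioo (0:ℝ) 1)
    (z : ℝ → ℝ) (hz : ContinuousOn z (Set.Iic 0))
    (S : ℝ → Y →L[ℝ] H) (hScont : ContinuousOn S (Set.Ioi 0))
    (hS : ∀ r > (0:ℝ), ‖S r‖ ≤ M * r ^ (-α) * Real.exp (-lam * r))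
    (ℓc ℓs : NNReal) (Fc : H → H) (Fs : H → Y)
    (hFc : LipschitzWith ℓc Fc) (hFc0 : Fc 0 = 0)
    (hFs : LipschitzWith ℓs Fs) (hFs0 : Fs 0 = 0)
    (κ : ℝ)
    (hκdef : κ = ℓc / (η + ν) + ℓs * M * Real.Gamma (1 - α) * (lam - η - ν) ^ (α - 1))
    (hκ : κ < 1) (ξ : H)
    (vstar : ℝ → H) (hmem : memCeta η z vstar)
    (hfix : ∀ t ≤ (0:ℝ), lpOp ν z S Fc Fs ξ vstar t = vstar t) :
    cetaNorm η z vstar ≤ (1 - κ)⁻¹ * ‖ξ‖ ∧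
    ∀ b > (0:ℝ), (∀ u : H, ‖Fs u‖ ≤ b * ‖u‖) →
      cetaNorm η z (fun t => ∫ τ in Set.Iic t,
          (Real.exp (ν * (t - τ) + ∫ r in τ..t, z r) * Real.exp (-z τ)) •
            (S (t - τ)) (Fs (Real.exp (z τ) • vstar τ)))
        ≤ b * M * Real.Gamma (1 - α) * (lam - η - ν) ^ (α - 1) * (1 - κ)⁻¹ * ‖ξ‖ :=
  fixed_point_bounds_general ν η lam M α hην hlam hM hα z hz S hS ℓc ℓs Fc Fs hFc hFc0 hFs hFs0 κ
    hκdef hκ ξ vstar hmem hfix
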